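/- arXiv:2308.05333 — 2 statements merged into one kernel-verified Lean document; each statement's English description precedes it below -/
import Mathlib

section
/- Let C be a symmetric real N×N matrix with rank(C) = N−1 whose null space is spanned by the all-ones vector. For any index i, let C' be the matrix obtained from C by setting every entry of the i-th row and of the i-th column to zero. Then rank(C') = N−1 and the null space of C' is spanned by the standard basis vector e_i. -/
open Matrix

/-- Zeroing out the `i`-th row and `i`-th column of a matrix. -/
def zeroRowCol {N : ℕ} (C : Matrix (Fin N) (Fin N) ℝ) (i : Fin N) :
    Matrix (Fin N) (Fin N) ℝ :=
  Matrix.of fun k l => if k = i ∨ l = i then 0 else C k l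

/-!
Symmetry and `C 1 = 0` make the column sums of `C` vanish, so the entries of `C y` sum to zero.
If `C' x = 0`, then `y = x` with its `i`-th entry set to zero satisfies `(C y)_k = 0` for
all `k ≠ i`, hence also for `k = i`; so `y ∈ ker C = span{1}` and `y_i = 0` force `y = 0`,
i.e. `x ∈ span{e_i}`. The rank follows by rank–nullity.
-/

namespace Matrix

variable {m n R : Type*} [Fintype n]

theorem rank_eq_card_sub_one_of_ker_eq_span [Field R] {A : Matrix m n R} {v : n → R}
    (hv : v ≠ 0) (hA : LinearMap.ker A.mulVecLin = R ∙ v) :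
    A.rank = Fintype.card n - 1 := by
  have h := LinearMap.finrank_range_add_finrank_ker A.mulVecLin
  rw [hA, finrank_span_singleton hv, Module.finrank_fintype_fun_eq_card] at h
  rw [rank]
  omega

theorem mulVec_eq_zero_of_forall_ne [Semiring R] {C : Matrix m n R} [Fintype m]
    (hC : 1 ᵥ* C = 0) {x : n → R} {i : m} (hx : ∀ k ≠ i, (C *ᵥ x) k = 0) :
    C *ᵥ x = 0 := by
  have hsum : ∑ k, (C *ᵥ x) k = 0 := by
    rw [← one_dotProduct, dotProduct_mulVec, hC, zero_dotProduct]
  have hi : (C *ᵥ x) i = 0 := by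
    rwa [Finset.sum_eq_single i (fun k _ hk => hx k hk) (by simp)] at hsum
  funext k
  obtain rfl | hk := eq_or_ne k i
  exacts [hi, hx k hk]

end Matrix

theorem zeroRowCol_mulVec {N : ℕ} (C : Matrix (Fin N) (Fin N) ℝ) (i : Fin N) (x : Fin N → ℝ) :
    zeroRowCol C i *ᵥ x = Function.update (C *ᵥ Function.update x i 0) i 0 := by
  funext k
  obtain rfl | hk := eq_or_ne k i
  · simp [zeroRowCol, mulVec, dotProduct]
  · simp only [zeroRowCol, mulVec, dotProduct, of_apply, Function.update_of_ne hk]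
    refine Finset.sum_congr rfl fun l _ => ?_
    obtain rfl | hl := eq_or_ne l i
    · simp
    · simp [hk, hl]

theorem zeroRowCol_mulVec_eq_zero_iff {N : ℕ} {C : Matrix (Fin N) (Fin N) ℝ} (hsymm : C.IsSymm)
    (hker : ∀ x : Fin N → ℝ, C.mulVec x = 0 ↔ ∃ c : ℝ, x = c • (fun _ => (1 : ℝ)))
    (i : Fin N) (x : Fin N → ℝ) :
    zeroRowCol C i *ᵥ x = 0 ↔ ∃ c : ℝ, x = c • (Pi.single i 1 : Fin N → ℝ) := by
  constructor
  · intro hx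
    have hcols : 1 ᵥ* C = 0 := by
      rw [← mulVec_transpose, hsymm.eq]
      exact (hker 1).2 ⟨1, (one_smul ℝ _).symm⟩
    set y := Function.update x i 0 with hy
    have hCy : C *ᵥ y = 0 := by
      refine mulVec_eq_zero_of_forall_ne hcols (i := i) fun k hk => ?_
      simpa [hk] using congrFun ((zeroRowCol_mulVec C i x).symm.trans hx) k
    obtain ⟨c, hc⟩ := (hker y).1 hCy
    have hc0 : c = 0 := by simpa [hy] using (congrFun hc i).symm
    have hx0 : ∀ k ≠ i, x k = 0 := fun k hk => by
      simpa [hy, hk, hc0] using congrFun hc k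
    refine ⟨x i, funext fun k => ?_⟩
    obtain rfl | hk := eq_or_ne k i
    · simp
    · simp [hk, hx0 k hk]
  · rintro ⟨c, rfl⟩
    rw [zeroRowCol_mulVec, ← Pi.single_smul', Pi.single, Function.update_idem]
    simp

theorem rank_zeroRowCol_and_ker_general
    {N : ℕ} (C : Matrix (Fin N) (Fin N) ℝ)
    (hsymm : C.IsSymm)
    (hker : ∀ x : Fin N → ℝ, C.mulVec x = 0 ↔ ∃ c : ℝ, x = c • (fun _ => (1 : ℝ)))
    (i : Fin N) :
    (zeroRowCol C i).rank = N - 1 ∧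
      (∀ x : Fin N → ℝ,
        (zeroRowCol C i).mulVec x = 0 ↔ ∃ c : ℝ, x = c • (Pi.single i 1 : Fin N → ℝ)) := by
  have hkerC' := zeroRowCol_mulVec_eq_zero_iff hsymm hker i
  have hspan : LinearMap.ker (zeroRowCol C i).mulVecLin = ℝ ∙ (Pi.single i 1 : Fin N → ℝ) := by
    ext x
    simp only [LinearMap.mem_ker, mulVecLin_apply, hkerC', Submodule.mem_span_singleton, eq_comm]
  refine ⟨?_, hkerC'⟩
  simpa using rank_eq_card_sub_one_of_ker_eq_span (by simp) hspan

/-- If `C` is a symmetric real `N × N` matrix of rank `N - 1` with null space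
spanned by the all-ones vector, then the matrix `C'` obtained by zeroing out the `i`-th row
and column of `C` still has rank `N - 1`, and its null space is spanned by `e_i`. -/
theorem rank_zeroRowCol_and_ker
    {N : ℕ} (hN : 0 < N) (C : Matrix (Fin N) (Fin N) ℝ)
    (hsymm : C.IsSymm) (hrank : C.rank = N - 1)
    (hker : ∀ x : Fin N → ℝ, C.mulVec x = 0 ↔ ∃ c : ℝ, x = c • (fun _ => (1 : ℝ)))
    (i : Fin N) :
    (zeroRowCol C i).rank = N - 1 ∧
      (∀ x : Fin N → ℝ,
        (zeroRowCol C i).mulVec x = 0 ↔ ∃ c : ℝ, x = c • (Pi.single i 1 : Fin N → ℝ)) :=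
  rank_zeroRowCol_and_ker_general C hsymm hker i
end

section
/- Let ∇ be a real m×N matrix whose null space is exactly the span of the all-ones vector 1 ∈ ℝ^N, and let A be a symmetric positive definite m×m real matrix; set C = ∇ᵀ A ∇. For any index i, let ℳ be the matrix obtained from C by setting every entry of the i-th row and i-th column to zero and then setting the (i,i) diagonal entry to 1 (the 'masking' of C at i). Then ℳ is a symmetric positive definite matrix. -/
/-!
Writing `y` for `x` with its `i`-th coordinate set to zero, the quadratic form of the masked
matrix is `xᵀ ℳ x = xᵢ² + yᵀ C y`, and `yᵀ C y = (∇y)ᵀ A (∇y)`. If `y = 0` then `xᵢ ≠ 0`;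
otherwise `y` vanishes at `i` without being zero, so it is not constant, hence `∇y ≠ 0` and
`(∇y)ᵀ A (∇y) > 0`.
-/

open Matrix

/-- The "masking" of a matrix at index `i`: the `i`-th row and `i`-th column are set to zero
and the `(i,i)` diagonal entry is set to `1`. -/
def maskMatrix {N : ℕ} (C : Matrix (Fin N) (Fin N) ℝ) (i : Fin N) :
    Matrix (Fin N) (Fin N) ℝ :=
  Matrix.of fun k l =>
    if k = i ∧ l = i then 1 else if k = i ∨ l = i then 0 else C k l

theorem Matrix.dotProduct_transpose_mul_mul_mulVec {m n R : Type*} [Fintype m] [Fintype n]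
    [CommSemiring R] (B : Matrix m n R) (A : Matrix m m R) (y : n → R) :
    y ⬝ᵥ (Bᵀ * A * B) *ᵥ y = (B *ᵥ y) ⬝ᵥ A *ᵥ (B *ᵥ y) := by
  rw [← mulVec_mulVec, ← mulVec_mulVec, dotProduct_mulVec, vecMul_transpose]

section
variable {N : ℕ} (i : Fin N)

theorem maskMatrix_transpose (C : Matrix (Fin N) (Fin N) ℝ) :
    (maskMatrix C i)ᵀ = maskMatrix Cᵀ i := by
  ext k l
  simp only [maskMatrix, transpose_apply, of_apply, and_comm, or_comm]

theorem Matrix.IsSymm.maskMatrix {C : Matrix (Fin N) (Fin N) ℝ} (hC : C.IsSymm) :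
    (maskMatrix C i).IsSymm := by
  rw [IsSymm, maskMatrix_transpose, hC.eq]

theorem maskMatrix_mulVec (C : Matrix (Fin N) (Fin N) ℝ) (x : Fin N → ℝ) :
    maskMatrix C i *ᵥ x = Function.update (C *ᵥ Function.update x i 0) i (x i) := by
  ext k
  rcases eq_or_ne k i with rfl | hk
  · simp [mulVec, dotProduct, maskMatrix]
  · simp only [mulVec, dotProduct, maskMatrix, of_apply, Function.update_of_ne hk]
    refine Finset.sum_congr rfl fun l _ => ?_
    rcases eq_or_ne l i with rfl | hl <;> simp [*]

theorem dotProduct_maskMatrix_mulVec (C : Matrix (Fin N) (Fin N) ℝ) (x : Fin N → ℝ) :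
    x ⬝ᵥ maskMatrix C i *ᵥ x =
      x i * x i + Function.update x i 0 ⬝ᵥ C *ᵥ Function.update x i 0 := by
  rw [maskMatrix_mulVec]
  simp only [dotProduct]
  rw [Fintype.sum_eq_add_sum_compl i, Fintype.sum_eq_add_sum_compl i]
  simp only [Function.update_self, zero_mul, zero_add]
  congr 1
  refine Finset.sum_congr rfl fun k hk => ?_
  have hk : k ≠ i := by simpa using hk
  rw [Function.update_of_ne hk, Function.update_of_ne hk]

theorem posDef_maskMatrix_of_pos {C : Matrix (Fin N) (Fin N) ℝ} (hC : C.IsSymm)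
    (hpos : ∀ y : Fin N → ℝ, y i = 0 → y ≠ 0 → 0 < y ⬝ᵥ C *ᵥ y) :
    (maskMatrix C i).PosDef := by
  refine .of_dotProduct_mulVec_pos (isHermitian_iff_isSymm.2 (hC.maskMatrix i)) fun x hx => ?_
  rw [star_trivial, dotProduct_maskMatrix_mulVec]
  set y := Function.update x i 0 with hy_def
  by_cases hy : y = 0
  · have hxi : x i ≠ 0 := fun h => hx <| by rw [← Function.update_eq_self i x, h, ← hy_def, hy]
    simpa [hy] using mul_self_pos.2 hxi
  · exact add_pos_of_nonneg_of_pos (mul_self_nonneg _) (hpos y (by simp [y]) hy)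

end

theorem maskMatrix_posDef_general
    {m N : ℕ}
    (grad : Matrix (Fin m) (Fin N) ℝ)
    (hker : ∀ x : Fin N → ℝ, grad.mulVec x = 0 ↔ ∃ c : ℝ, x = c • (fun _ => (1 : ℝ)))
    (A : Matrix (Fin m) (Fin m) ℝ) (hA : A.PosDef)
    (i : Fin N) :
    (maskMatrix (gradᵀ * A * grad) i).PosDef := by
  have hC : (gradᵀ * A * grad).IsSymm := by
    simpa using isHermitian_conjTranspose_mul_mul grad hA.isHermitian
  refine posDef_maskMatrix_of_pos i hC fun y hyi hy => ?_
  have hgrad : grad *ᵥ y ≠ 0 := by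
    intro h
    obtain ⟨c, rfl⟩ := (hker y).1 h
    have hc : c = 0 := by simpa using hyi
    exact hy (by simp [hc])
  rw [dotProduct_transpose_mul_mul_mulVec]
  simpa only [star_trivial] using hA.dotProduct_mulVec_pos hgrad

/-- Let `∇` be a real `m × N` matrix whose null space is the span of the
all-ones vector and `A` a symmetric positive definite `m × m` matrix; set `C = ∇ᵀ A ∇`.
Then the masking of `C` at any index `i` is symmetric positive definite. -/
theorem maskMatrix_posDef
    {m N : ℕ} (hN : 0 < N)
    (grad : Matrix (Fin m) (Fin N) ℝ)
    (hker : ∀ x : Fin N → ℝ, grad.mulVec x = 0 ↔ ∃ c : ℝ, x = c • (fun _ => (1 : ℝ)))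
    (A : Matrix (Fin m) (Fin m) ℝ) (hA : A.PosDef)
    (i : Fin N) :
    (maskMatrix (gradᵀ * A * grad) i).PosDef :=
  maskMatrix_posDef_general grad hker A hA i
end
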